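/- arXiv:2102.08966 — 4 statements merged into one kernel-verified Lean document; each statement's English description precedes it below -/
import Mathlib

section
/- Let p be a two-input two-output no-signaling box with p(0,1|1,1) = p(1,0|1,1) = 0 (perfectly correlated outcomes on inputs x=y=1), and suppose all four conditioning marginals Σ_b p(a,b|0,1) for a ∈ {0,1} and Σ_a p(a,b|1,0) for b ∈ {0,1} are positive. Let q_A, q_B ∈ [0,1] be such that p(a,1|0,1) = q_A·Σ_b p(a,b|0,1) for both a = 0,1 and p(1,b|1,0) = q_B·Σ_a p(a,b|1,0) for both b = 0,1 (i.e., α₀ = β₀ = {0,1}). Then q_A = q_B. -/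
open Kronecker ComplexOrder

/-- A (bipartite) box: nonnegative entries, normalized for every input pair. -/
def IsBox {nA nB nX nY : ℕ} (p : Fin nA → Fin nB → Fin nX → Fin nY → ℝ) : Prop :=
  (∀ a b x y, 0 ≤ p a b x y) ∧ (∀ x y, (∑ a, ∑ b, p a b x y) = 1)

/-- No-signaling: each party's marginal does not depend on the other's input. -/
def NoSignaling {nA nB nX nY : ℕ} (p : Fin nA → Fin nB → Fin nX → Fin nY → ℝ) : Prop :=
  (∀ b y x x', (∑ a, p a b x y) = ∑ a, p a b x' y) ∧
  (∀ a x y y', (∑ b, p a b x y) = ∑ b, p a b x y')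

/-- Local (classical) box: a convex mixture of product deterministic/stochastic strategies. -/
def IsLocal {nA nB nX nY : ℕ} (p : Fin nA → Fin nB → Fin nX → Fin nY → ℝ) : Prop :=
  ∃ (Λ : ℕ) (w : Fin Λ → ℝ) (pA : Fin nA → Fin nX → Fin Λ → ℝ)
    (pB : Fin nB → Fin nY → Fin Λ → ℝ),
    (∀ l, 0 ≤ w l) ∧ ((∑ l, w l) = 1) ∧
    (∀ a x l, 0 ≤ pA a x l) ∧ (∀ x l, (∑ a, pA a x l) = 1) ∧
    (∀ b y l, 0 ≤ pB b y l) ∧ (∀ y l, (∑ b, pB b y l) = 1) ∧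
    (∀ a b x y, p a b x y = ∑ l, w l * pA a x l * pB b y l)

/-- Quantum box: realized by POVMs on a bipartite quantum state. -/
def IsQuantum {nA nB nX nY : ℕ} (p : Fin nA → Fin nB → Fin nX → Fin nY → ℝ) : Prop :=
  ∃ (dA dB : ℕ) (_ : 0 < dA) (_ : 0 < dB)
    (ρ : Matrix (Fin dA × Fin dB) (Fin dA × Fin dB) ℂ)
    (E : Fin nX → Fin nA → Matrix (Fin dA) (Fin dA) ℂ)
    (F : Fin nY → Fin nB → Matrix (Fin dB) (Fin dB) ℂ),
    ρ.PosSemidef ∧ ρ.trace = 1 ∧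
    (∀ x a, (E x a).PosSemidef) ∧ (∀ x, (∑ a, E x a) = 1) ∧
    (∀ y b, (F y b).PosSemidef) ∧ (∀ y, (∑ b, F y b) = 1) ∧
    (∀ a b x y, ((E x a ⊗ₖ F y b) * ρ).trace = (p a b x y : ℂ))

open Classical in
/-- The certainty hierarchy `(α_n, β_n)` of the agreement framework:
`α₀` are Alice's outputs (on input `x = 0`) from which she assigns conditional
probability `qA` to Bob outputting `1` on input `y = 1`; `β₀` is the analogue
for Bob; and at each later stage each party is moreover certain (on inputs
`x = y = 0`) that the other's output lies in the previous stage's set. -/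
noncomputable def alphaBeta {nA nB nX nY : ℕ} [NeZero nA] [NeZero nB] [NeZero nX] [NeZero nY]
    (p : Fin nA → Fin nB → Fin nX → Fin nY → ℝ) (qA qB : ℝ) :
    ℕ → Set (Fin nA) × Set (Fin nB)
  | 0 =>
      ({a | 0 < (∑ b, p a b 0 1) ∧ p a 1 0 1 = qA * (∑ b, p a b 0 1)},
       {b | 0 < (∑ a, p a b 1 0) ∧ p 1 b 1 0 = qB * (∑ a, p a b 1 0)})
  | n + 1 =>
      ({a | a ∈ (alphaBeta p qA qB n).1 ∧ 0 < (∑ b, p a b 0 0) ∧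
            (∑ b, if b ∈ (alphaBeta p qA qB n).2 then p a b 0 0 else 0) = ∑ b, p a b 0 0},
       {b | b ∈ (alphaBeta p qA qB n).2 ∧ 0 < (∑ a, p a b 0 0) ∧
            (∑ a, if a ∈ (alphaBeta p qA qB n).1 then p a b 0 0 else 0) = ∑ a, p a b 0 0})

open Fin.NatCast in
/-- The box gives rise to common certainty of disagreement: for some `qA ≠ qB` in `[0,1]`,
the outputs on inputs `x = y = 1` are perfectly correlated, the event
`(a,b,x,y) = (0,0,0,0)` has positive probability, and `0 ∈ α_n`, `0 ∈ β_n` for every `n`. -/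
def CommonCertaintyOfDisagreement {nA nB nX nY : ℕ}
    [NeZero nA] [NeZero nB] [NeZero nX] [NeZero nY]
    (p : Fin nA → Fin nB → Fin nX → Fin nY → ℝ) : Prop :=
  ∃ qA qB : ℝ, qA ∈ Set.Icc (0:ℝ) 1 ∧ qB ∈ Set.Icc (0:ℝ) 1 ∧ qA ≠ qB ∧
    (∀ a b, (a : ℕ) ≠ (b : ℕ) → p a b 1 1 = 0) ∧ 0 < p 0 0 0 0 ∧
    (∀ n : ℕ, (0 : Fin nA) ∈ (alphaBeta p qA qB n).1 ∧ (0 : Fin nB) ∈ (alphaBeta p qA qB n).2)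

open Fin.NatCast in
/-- The box gives rise to singular disagreement: perfectly correlated outputs on inputs
`x = y = 1`, positive probability of `(0,0,0,0)`, Alice assigns conditional probability
`qA = 1` to `b = 1` given `a = 0, x = 0, y = 1`, and Bob assigns conditional probability
`qB = 0` to `a = 1` given `b = 0, x = 1, y = 0`. -/
def SingularDisagreement {nA nB nX nY : ℕ}
    [NeZero nA] [NeZero nB] [NeZero nX] [NeZero nY]
    (p : Fin nA → Fin nB → Fin nX → Fin nY → ℝ) : Prop :=
  (∀ a b, (a : ℕ) ≠ (b : ℕ) → p a b 1 1 = 0) ∧ 0 < p 0 0 0 0 ∧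
  (0 < ∑ b, p 0 b 0 1) ∧ (p 0 1 0 1 = ∑ b, p 0 b 0 1) ∧
  (0 < ∑ a, p a 0 1 0) ∧ (p 1 0 1 0 = 0)


/-!
Summing Alice's conditional assignments over her outcomes gives `qA = P(b = 1 | y = 1)`, and
likewise `qB = P(a = 1 | x = 1)`. By no-signaling both marginals can be read off the input pair
`(1, 1)`, where perfect correlation makes each equal to `p(1,1|1,1)`.
-/

section Marginals

variable {α β : Type*} [Fintype α] [Fintype β] (f : α → β → ℝ) {q : ℝ}

theorem sum_fst_eq_of_forall_eq_mul_sum_snd (hnorm : ∑ a, ∑ b, f a b = 1) {b₀ : β}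
    (h : ∀ a, f a b₀ = q * ∑ b, f a b) : ∑ a, f a b₀ = q := by
  rw [Finset.sum_congr rfl fun a _ => h a, ← Finset.mul_sum, hnorm, mul_one]

theorem sum_snd_eq_of_forall_eq_mul_sum_fst (hnorm : ∑ a, ∑ b, f a b = 1) {a₀ : α}
    (h : ∀ b, f a₀ b = q * ∑ a, f a b) : ∑ b, f a₀ b = q := by
  rw [Finset.sum_comm] at hnorm
  rw [Finset.sum_congr rfl fun b _ => h b, ← Finset.mul_sum, hnorm, mul_one]

end Marginals

theorem full_alpha_beta_implies_agreement_general
    (p : Fin 2 → Fin 2 → Fin 2 → Fin 2 → ℝ)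
    (hbox : IsBox p) (hns : NoSignaling p)
    (hpc1 : p 0 1 1 1 = 0) (hpc2 : p 1 0 1 1 = 0)
    (qA qB : ℝ)
    (hA : ∀ a, p a 1 0 1 = qA * (∑ b, p a b 0 1))
    (hB : ∀ b, p 1 b 1 0 = qB * (∑ a, p a b 1 0)) :
    qA = qB :=
  calc qA
    _ = ∑ a, p a 1 0 1 := (sum_fst_eq_of_forall_eq_mul_sum_snd (p · · 0 1) (hbox.2 0 1) hA).symm
    _ = ∑ a, p a 1 1 1 := hns.1 1 1 0 1
    _ = p 1 1 1 1 := by simp [Fin.sum_univ_two, hpc1]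
    _ = ∑ b, p 1 b 1 1 := by simp [Fin.sum_univ_two, hpc2]
    _ = ∑ b, p 1 b 1 0 := hns.2 1 1 1 0
    _ = qB := sum_snd_eq_of_forall_eq_mul_sum_fst (p · · 1 0) (hbox.2 1 0) hB

/-- Case 3 of the proof of Theorem 3 of the paper: if every outcome of Alice leads her to
assign probability `qA`, and every outcome of Bob leads him to assign probability `qB`
(i.e. `α₀ = β₀ = {0,1}`), then perfect correlation at inputs `x = y = 1` forces `qA = qB`. -/
theorem full_alpha_beta_implies_agreement
    (p : Fin 2 → Fin 2 → Fin 2 → Fin 2 → ℝ)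
    (hbox : IsBox p) (hns : NoSignaling p)
    (hpc1 : p 0 1 1 1 = 0) (hpc2 : p 1 0 1 1 = 0)
    (hmA : ∀ a, 0 < ∑ b, p a b 0 1) (hmB : ∀ b, 0 < ∑ a, p a b 1 0)
    (qA qB : ℝ) (hqA : qA ∈ Set.Icc (0:ℝ) 1) (hqB : qB ∈ Set.Icc (0:ℝ) 1)
    (hA : ∀ a, p a 1 0 1 = qA * (∑ b, p a b 0 1))
    (hB : ∀ b, p 1 b 1 0 = qB * (∑ a, p a b 1 0)) :
    qA = qB :=
  full_alpha_beta_implies_agreement_general p hbox hns hpc1 hpc2 qA qB hA hB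
end

section
/- No two-input two-output quantum box gives rise to common certainty of disagreement. That is, if p is a two-input two-output box that is quantum, then p does not give rise to common certainty of disagreement. -/
open Kronecker ComplexOrder

/-!
Let `A = ⋂ₙ αₙ` and `B = ⋂ₙ βₙ`. Common certainty makes the events `a ∈ A` and `b ∈ B` perfectly
correlated on inputs `(0, 0)`, and `a = 1`, `b = 1` perfectly correlated on inputs `(1, 1)`. In a
quantum realization, perfect correlation of `a ∈ S` with `b ∈ T` means that the state cannot tell
Alice's effect `∑_{a ∈ S} E_x^a` from Bob's `∑_{b ∈ T} F_y^b`; exchanging effects in this way turns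
`P(a ∈ A, b = 1 | 0, 1)` into the complex conjugate of `P(a = 1, b ∈ B | 1, 0)`, so the two are
equal. By the definition of `α₀` and `β₀` they are `qA * m` and `qB * m`, where
`m = P(a ∈ A | x = 0) = P(b ∈ B | y = 0)` is positive since `0 ∈ A`. Hence `qA = qB`.
-/

open Matrix Finset

theorem Finset.eq_zero_of_sum_ite_mem_eq_sum {ι M : Type*} [Fintype ι] [AddCommMonoid M]
    [PartialOrder M] [IsOrderedCancelAddMonoid M] {f : ι → M} (hf : ∀ i, 0 ≤ f i) {s : Set ι}
    [DecidablePred (· ∈ s)] (h : ∑ i, (if i ∈ s then f i else 0) = ∑ i, f i) {i : ι}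
    (hi : i ∉ s) : f i = 0 := by
  have hle : ∀ j ∈ univ, (if j ∈ s then f j else 0) ≤ f j := fun j _ => by
    split_ifs <;> simp [hf j]
  simpa [hi] using ((sum_eq_sum_iff_of_le hle).mp h i (mem_univ i)).symm

namespace Matrix

theorem sum_kronecker {R ι l m n p : Type*} [NonUnitalNonAssocSemiring R] (s : Finset ι)
    (A : ι → Matrix l m R) (B : Matrix n p R) :
    (∑ i ∈ s, A i) ⊗ₖ B = ∑ i ∈ s, A i ⊗ₖ B := by
  ext; simp [Matrix.sum_apply, Finset.sum_mul]

theorem kronecker_sum {R κ l m n p : Type*} [NonUnitalNonAssocSemiring R] (s : Finset κ)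
    (A : Matrix l m R) (B : κ → Matrix n p R) :
    A ⊗ₖ (∑ j ∈ s, B j) = ∑ j ∈ s, A ⊗ₖ B j := by
  ext; simp [Matrix.sum_apply, Finset.mul_sum]

theorem sum_kronecker_sum_mul {R ι κ l m n p q : Type*} [NonUnitalNonAssocSemiring R] [Fintype m]
    [Fintype p] (s : Finset ι) (t : Finset κ) (A : ι → Matrix l m R) (B : κ → Matrix n p R)
    (ρ : Matrix (m × p) q R) :
    ((∑ i ∈ s, A i) ⊗ₖ ∑ j ∈ t, B j) * ρ = ∑ i ∈ s, ∑ j ∈ t, (A i ⊗ₖ B j) * ρ := by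
  rw [sum_kronecker, Matrix.sum_mul]
  simp only [kronecker_sum, Matrix.sum_mul]

variable {R m n ι κ : Type*} [Fintype m] [Fintype n] [DecidableEq m] [DecidableEq n]

section CommSemiring

variable [CommSemiring R]

/-- Both sides equal `((∑ i ∈ s, E i) ⊗ₖ ∑ j ∈ t, F j) * ρ`. -/
theorem sum_kronecker_one_mul_eq_one_kronecker_sum_mul [Fintype ι] [Fintype κ] [DecidableEq ι]
    [DecidableEq κ] {E : ι → Matrix m m R} {F : κ → Matrix n n R} (hE : ∑ i, E i = 1)
    (hF : ∑ j, F j = 1) {ρ : Matrix (m × n) (m × n) R} {s : Finset ι} {t : Finset κ}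
    (h : ∀ i j, (i ∈ s ↔ j ∉ t) → (E i ⊗ₖ F j) * ρ = 0) :
    ((∑ i ∈ s, E i) ⊗ₖ 1) * ρ = (1 ⊗ₖ ∑ j ∈ t, F j) * ρ := by
  have hs : ((∑ i ∈ sᶜ, E i) ⊗ₖ ∑ j ∈ t, F j) * ρ = 0 := by
    rw [sum_kronecker_sum_mul]
    exact sum_eq_zero fun i hi => sum_eq_zero fun j hj => h i j (by simp_all)
  have ht : ((∑ i ∈ s, E i) ⊗ₖ ∑ j ∈ tᶜ, F j) * ρ = 0 := by
    rw [sum_kronecker_sum_mul]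
    exact sum_eq_zero fun i hi => sum_eq_zero fun j hj => h i j (by simp_all)
  calc ((∑ i ∈ s, E i) ⊗ₖ 1) * ρ
      = ((∑ i ∈ s, E i) ⊗ₖ ((∑ j ∈ t, F j) + ∑ j ∈ tᶜ, F j)) * ρ := by
        rw [sum_add_sum_compl, hF]
    _ = (((∑ i ∈ s, E i) + ∑ i ∈ sᶜ, E i) ⊗ₖ ∑ j ∈ t, F j) * ρ := by
        rw [kronecker_add, add_kronecker, add_mul, add_mul, hs, ht]
    _ = (1 ⊗ₖ ∑ j ∈ t, F j) * ρ := by rw [sum_add_sum_compl, hE]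

/-- `G ⊗ F` and `E ⊗ H` act on `ρ` as `(G * E) ⊗ 1` and `(E * G) ⊗ 1`, whose expectations in the
hermitian `ρ` are conjugate. -/
theorem trace_kronecker_mul_eq_star_trace_kronecker_mul [StarRing R]
    {ρ : Matrix (m × n) (m × n) R} (hρ : ρ.IsHermitian) {G E : Matrix m m R}
    (hG : G.IsHermitian) (hE : E.IsHermitian) {H F : Matrix n n R}
    (hGH : (G ⊗ₖ 1) * ρ = (1 ⊗ₖ H) * ρ) (hEF : (E ⊗ₖ 1) * ρ = (1 ⊗ₖ F) * ρ) :
    ((G ⊗ₖ F) * ρ).trace = star ((E ⊗ₖ H) * ρ).trace := by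
  have hGF : (G ⊗ₖ F) * ρ = ((G * E) ⊗ₖ 1) * ρ := by
    rw [← mul_one G, ← one_mul F, mul_kronecker_mul, mul_assoc, ← hEF, ← mul_assoc,
      ← mul_kronecker_mul, one_mul, mul_one]
  have hEH : (E ⊗ₖ H) * ρ = ((E * G) ⊗ₖ 1) * ρ := by
    rw [← mul_one E, ← one_mul H, mul_kronecker_mul, mul_assoc, ← hGH, ← mul_assoc,
      ← mul_kronecker_mul, one_mul, mul_one]
  rw [hGF, hEH, ← trace_conjTranspose, conjTranspose_mul, hρ.eq, conjTranspose_kronecker,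
    conjTranspose_mul, hG.eq, hE.eq, conjTranspose_one, trace_mul_comm]

end CommSemiring

open scoped MatrixOrder in
theorem PosSemidef.mul_eq_zero_of_trace_mul_eq_zero {X ρ : Matrix m m ℂ} (hX : X.PosSemidef)
    (hρ : ρ.PosSemidef) (h : (X * ρ).trace = 0) : X * ρ = 0 := by
  obtain ⟨A, rfl⟩ := CStarAlgebra.nonneg_iff_eq_star_mul_self.mp hX.nonneg
  obtain ⟨B, rfl⟩ := CStarAlgebra.nonneg_iff_eq_mul_star_self.mp hρ.nonneg
  simp only [star_eq_conjTranspose] at h ⊢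
  have hAB : A * B = 0 := by
    rw [← trace_mul_conjTranspose_self_eq_zero_iff, ← h, conjTranspose_mul,
      trace_mul_comm (Aᴴ * A)]
    simp only [mul_assoc]
    rw [trace_mul_comm A]
    simp only [mul_assoc]
  rw [mul_assoc, ← mul_assoc A, hAB, zero_mul, mul_zero]

end Matrix

theorem IsQuantum.sum_sum_eq_of_perfectly_correlated {nA nB nX nY : ℕ}
    {p : Fin nA → Fin nB → Fin nX → Fin nY → ℝ} (hq : IsQuantum p) {x x' : Fin nX}
    {y y' : Fin nY} {S S' : Finset (Fin nA)} {T T' : Finset (Fin nB)}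
    (h : ∀ a b, (a ∈ S ↔ b ∉ T) → p a b x y = 0)
    (h' : ∀ a b, (a ∈ S' ↔ b ∉ T') → p a b x' y' = 0) :
    ∑ a ∈ S, ∑ b ∈ T', p a b x y' = ∑ a ∈ S', ∑ b ∈ T, p a b x' y := by
  obtain ⟨dA, dB, -, -, ρ, E, F, hρ, -, hE, hE1, hF, hF1, hp⟩ := hq
  have vanish : ∀ {x y a b}, p a b x y = 0 → (E x a ⊗ₖ F y b) * ρ = 0 := fun hab =>
    ((hE _ _).kronecker (hF _ _)).mul_eq_zero_of_trace_mul_eq_zero hρ (by rw [hp, hab]; simp)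
  have trace_eq : ∀ x y (S : Finset (Fin nA)) (T : Finset (Fin nB)),
      (((∑ a ∈ S, E x a) ⊗ₖ ∑ b ∈ T, F y b) * ρ).trace =
        ((∑ a ∈ S, ∑ b ∈ T, p a b x y : ℝ) : ℂ) := by
    intro x y S T
    rw [sum_kronecker_sum_mul]
    push_cast
    simp only [trace_sum, hp]
  have hermitian : ∀ x (S : Finset (Fin nA)), (∑ a ∈ S, E x a).IsHermitian := fun x S =>
    (posSemidef_sum S fun a _ => hE x a).isHermitian
  apply Complex.ofReal_injective
  rw [← trace_eq, ← trace_eq, trace_kronecker_mul_eq_star_trace_kronecker_mul hρ.isHermitian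
    (hermitian x S) (hermitian x' S')
    (sum_kronecker_one_mul_eq_one_kronecker_sum_mul (hE1 x) (hF1 y) fun a b hab =>
      vanish (h a b hab))
    (sum_kronecker_one_mul_eq_one_kronecker_sum_mul (hE1 x') (hF1 y') fun a b hab =>
      vanish (h' a b hab)),
    trace_eq, Complex.star_def, Complex.conj_ofReal]

section CommonCertainty

variable {nA nB nX nY : ℕ} [NeZero nA] [NeZero nB] [NeZero nX] [NeZero nY]

open Classical in
noncomputable def commonCertaintyFst (p : Fin nA → Fin nB → Fin nX → Fin nY → ℝ) (qA qB : ℝ) :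
    Finset (Fin nA) :=
  {a | ∀ n, a ∈ (alphaBeta p qA qB n).1}

open Classical in
noncomputable def commonCertaintySnd (p : Fin nA → Fin nB → Fin nX → Fin nY → ℝ) (qA qB : ℝ) :
    Finset (Fin nB) :=
  {b | ∀ n, b ∈ (alphaBeta p qA qB n).2}

variable {p : Fin nA → Fin nB → Fin nX → Fin nY → ℝ} {qA qB : ℝ}

theorem mem_commonCertaintyFst {a : Fin nA} :
    a ∈ commonCertaintyFst p qA qB ↔ ∀ n, a ∈ (alphaBeta p qA qB n).1 := by
  simp [commonCertaintyFst]

theorem mem_commonCertaintySnd {b : Fin nB} :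
    b ∈ commonCertaintySnd p qA qB ↔ ∀ n, b ∈ (alphaBeta p qA qB n).2 := by
  simp [commonCertaintySnd]

theorem prob_eq_zero_of_mem_commonCertaintyFst_iff_not_mem_commonCertaintySnd
    (hp : ∀ a b x y, 0 ≤ p a b x y) (a : Fin nA) (b : Fin nB)
    (hab : a ∈ commonCertaintyFst p qA qB ↔ b ∉ commonCertaintySnd p qA qB) : p a b 0 0 = 0 := by
  classical
  by_cases ha : a ∈ commonCertaintyFst p qA qB
  · obtain ⟨n, hbn⟩ : ∃ n, b ∉ (alphaBeta p qA qB n).2 := by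
      simpa [mem_commonCertaintySnd] using hab.mp ha
    exact eq_zero_of_sum_ite_mem_eq_sum (fun b => hp a b 0 0)
      (mem_commonCertaintyFst.mp ha (n + 1)).2.2 hbn
  · obtain ⟨n, han⟩ : ∃ n, a ∉ (alphaBeta p qA qB n).1 := by
      simpa [mem_commonCertaintyFst] using ha
    exact eq_zero_of_sum_ite_mem_eq_sum (fun a => hp a b 0 0)
      (mem_commonCertaintySnd.mp (not_not.mp (mt hab.mpr ha)) (n + 1)).2.2 han

theorem sum_prob_commonCertaintyFst :
    ∑ a ∈ commonCertaintyFst p qA qB, p a 1 0 1 =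
      qA * ∑ a ∈ commonCertaintyFst p qA qB, ∑ b, p a b 0 1 := by
  rw [mul_sum]
  exact sum_congr rfl fun a ha => (mem_commonCertaintyFst.mp ha 0).2

theorem sum_prob_commonCertaintySnd :
    ∑ b ∈ commonCertaintySnd p qA qB, p 1 b 1 0 =
      qB * ∑ b ∈ commonCertaintySnd p qA qB, ∑ a, p a b 1 0 := by
  rw [mul_sum]
  exact sum_congr rfl fun b hb => (mem_commonCertaintySnd.mp hb 0).2

theorem sum_marginal_commonCertaintyFst_pos (hp : ∀ a b x y, 0 ≤ p a b x y) {a : Fin nA}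
    (ha : a ∈ commonCertaintyFst p qA qB) :
    0 < ∑ a ∈ commonCertaintyFst p qA qB, ∑ b, p a b 0 1 :=
  sum_pos' (fun a _ => sum_nonneg fun b _ => hp a b 0 1)
    ⟨a, ha, (mem_commonCertaintyFst.mp ha 0).1⟩

end CommonCertainty

/-- Theorem 4 of the paper: no two-input two-output quantum box gives rise to
common certainty of disagreement. -/
theorem quantum_2x2_no_ccd
    (p : Fin 2 → Fin 2 → Fin 2 → Fin 2 → ℝ)
    (hbox : IsBox p) (hq : IsQuantum p) :
    ¬ CommonCertaintyOfDisagreement p := by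
  rintro ⟨qA, qB, -, -, hne, hcorr, -, hmem⟩
  have h00 := prob_eq_zero_of_mem_commonCertaintyFst_iff_not_mem_commonCertaintySnd
    (qA := qA) (qB := qB) hbox.1
  have h11 : ∀ a b, (a ∈ ({1} : Finset (Fin 2)) ↔ b ∉ ({1} : Finset (Fin 2))) → p a b 1 1 = 0 :=
    fun a b hab => by
      simpa using hcorr a b (Fin.val_ne_of_ne fun h => by subst h; exact iff_not_self hab)
  have h_univ : ∀ a b, (a ∈ (univ : Finset (Fin 2)) ↔ b ∉ (univ : Finset (Fin 2))) →
      p a b 1 1 = 0 := by simp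
  have hcross := hq.sum_sum_eq_of_perfectly_correlated h00 h11
  have hmarg := (hq.sum_sum_eq_of_perfectly_correlated h00 h_univ).trans sum_comm
  simp only [sum_singleton] at hcross
  rw [sum_prob_commonCertaintyFst, sum_prob_commonCertaintySnd, ← hmarg] at hcross
  have hpos := sum_marginal_commonCertaintyFst_pos hbox.1
    (mem_commonCertaintyFst.mpr fun n => (hmem n).1)
  exact hne (mul_right_cancel₀ hpos.ne' hcross)
end

section
/- No local two-input two-output box gives rise to singular disagreement. Equivalently, there is no local two-input two-output box p with p(0,0|0,0) > 0, p(0,0|0,1) = 0, p(1,0|1,0) = 0 and p(0,1|1,1) = 0 (a form of Hardy's paradox). -/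
open Kronecker ComplexOrder

/-! A hidden variable `λ` contributing to `p(0,0|0,0)` has Alice output `0` on `x = 0` and Bob
output `0` on `y = 0` with positive probability. Then `p(0,0|0,1) = 0` forces Bob to output `1`
on `y = 1` at `λ`, and `p(1,0|1,0) = 0` forces Alice to output `0` on `x = 1` at `λ`, so `λ`
contributes positively to `p(0,1|1,1)`. -/

def HardyParadox (p : Fin 2 → Fin 2 → Fin 2 → Fin 2 → ℝ) : Prop :=
  0 < p 0 0 0 0 ∧ p 0 0 0 1 = 0 ∧ p 1 0 1 0 = 0 ∧ p 0 1 1 1 = 0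

section HiddenVariable

variable {nA nB nX nY Λ : ℕ} {w : Fin Λ → ℝ} {pA : Fin nA → Fin nX → Fin Λ → ℝ}
  {pB : Fin nB → Fin nY → Fin Λ → ℝ}

theorem exists_pos_of_sum_hiddenVariable_pos (hw : ∀ l, 0 ≤ w l) (hA : ∀ a x l, 0 ≤ pA a x l)
    (hB : ∀ b y l, 0 ≤ pB b y l) {a b x y} (h : 0 < ∑ l, w l * pA a x l * pB b y l) :
    ∃ l, 0 < w l ∧ 0 < pA a x l ∧ 0 < pB b y l := by
  obtain ⟨l, -, hl⟩ := Finset.exists_ne_zero_of_sum_ne_zero h.ne'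
  simp only [ne_eq, mul_eq_zero, not_or] at hl
  obtain ⟨⟨hwl, hAl⟩, hBl⟩ := hl
  exact ⟨l, (hw l).lt_of_ne' hwl, (hA a x l).lt_of_ne' hAl, (hB b y l).lt_of_ne' hBl⟩

theorem eq_zero_or_eq_zero_of_sum_hiddenVariable_eq_zero (hw : ∀ l, 0 ≤ w l)
    (hA : ∀ a x l, 0 ≤ pA a x l) (hB : ∀ b y l, 0 ≤ pB b y l) {a b x y}
    (h : ∑ l, w l * pA a x l * pB b y l = 0) {l : Fin Λ} (hl : 0 < w l) :
    pA a x l = 0 ∨ pB b y l = 0 := by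
  have hterm := (Finset.sum_eq_zero_iff_of_nonneg fun i _ =>
    mul_nonneg (mul_nonneg (hw i) (hA a x i)) (hB b y i)).mp h l (Finset.mem_univ l)
  simpa [hl.ne'] using hterm

end HiddenVariable

theorem Fin.eq_one_of_sum_eq_one_of_eq_zero {q : Fin 2 → ℝ} (h : ∑ i, q i = 1) {i j : Fin 2}
    (hij : i ≠ j) (hj : q j = 0) : q i = 1 := by
  rw [Fin.sum_univ_two] at h
  fin_cases i <;> fin_cases j <;> simp_all

theorem IsLocal.not_hardyParadox {p : Fin 2 → Fin 2 → Fin 2 → Fin 2 → ℝ} (hp : IsLocal p) :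
    ¬ HardyParadox p := by
  obtain ⟨Λ, w, pA, pB, hw, -, hA, hAsum, hB, hBsum, hmix⟩ := hp
  rintro ⟨h0000, h0001, h1010, h0111⟩
  rw [hmix] at h0000 h0001 h1010 h0111
  obtain ⟨l, hwl, hA00, hB00⟩ := exists_pos_of_sum_hiddenVariable_pos hw hA hB h0000
  have hB01 : pB 0 1 l = 0 :=
    (eq_zero_or_eq_zero_of_sum_hiddenVariable_eq_zero hw hA hB h0001 hwl).resolve_left hA00.ne'
  have hA11 : pA 1 1 l = 0 :=
    (eq_zero_or_eq_zero_of_sum_hiddenVariable_eq_zero hw hA hB h1010 hwl).resolve_right hB00.ne'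
  have hB11 : pB 1 1 l = 1 := Fin.eq_one_of_sum_eq_one_of_eq_zero (hBsum 1 l) (by decide) hB01
  have hA01 : pA 0 1 l = 1 := Fin.eq_one_of_sum_eq_one_of_eq_zero (hAsum 1 l) (by decide) hA11
  have := eq_zero_or_eq_zero_of_sum_hiddenVariable_eq_zero hw hA hB h0111 hwl
  simp [hA01, hB11] at this

theorem SingularDisagreement.hardyParadox {p : Fin 2 → Fin 2 → Fin 2 → Fin 2 → ℝ}
    (hp : SingularDisagreement p) : HardyParadox p := by
  obtain ⟨hcorr, h0000, -, hcert, -, h1010⟩ := hp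
  rw [Fin.sum_univ_two] at hcert
  exact ⟨h0000, by linarith, h1010, hcorr 0 1 (by decide)⟩

/-- Theorem 6 of the paper: no local two-input two-output box gives rise to singular
disagreement; equivalently, no local box realizes the associated Hardy paradox
`p(0,0|0,0) > 0`, `p(0,0|0,1) = 0`, `p(1,0|1,0) = 0`, `p(0,1|1,1) = 0`. -/
theorem local_no_singular_disagreement :
    (∀ p : Fin 2 → Fin 2 → Fin 2 → Fin 2 → ℝ,
      IsBox p → IsLocal p → ¬ SingularDisagreement p) ∧
    (∀ p : Fin 2 → Fin 2 → Fin 2 → Fin 2 → ℝ,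
      IsBox p → IsLocal p →
        ¬ (0 < p 0 0 0 0 ∧ p 0 0 0 1 = 0 ∧ p 1 0 1 0 = 0 ∧ p 0 1 1 1 = 0)) :=
  ⟨fun _ _ hp hsd => hp.not_hardyParadox hsd.hardyParadox, fun _ _ hp => hp.not_hardyParadox⟩
end

section
/- No two-input two-output quantum box gives rise to singular disagreement. That is, if p is a two-input two-output box that is quantum, then p does not give rise to singular disagreement. -/
/-!
Zero probabilities of a quantum box are operator identities on the state: for positive `E`, `F`,
`ρ`, `tr ((E ⊗ F) ρ) = 0` forces `(E ⊗ F) ρ = 0`. Perfect correlation on inputs `x = y = 1` thus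
gives `(E₁¹ ⊗ 1) ρ = (1 ⊗ F₁¹) ρ`, while `q_B = 0` and `q_A = 1` give `(E₁¹ ⊗ F₀⁰) ρ = 0` and
`(E₀⁰ ⊗ 1) ρ = (E₀⁰ ⊗ F₁¹) ρ`. As Alice's operators commute with Bob's,
`(E₀⁰ ⊗ F₀⁰) ρ = (E₀⁰ ⊗ F₀⁰)(1 ⊗ F₁¹) ρ = (E₀⁰ ⊗ F₀⁰)(E₁¹ ⊗ 1) ρ = (E₀⁰ ⊗ 1)(E₁¹ ⊗ F₀⁰) ρ = 0`,
contradicting `p(0,0|0,0) > 0`.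
-/

open Kronecker ComplexOrder

open Matrix in
open scoped MatrixOrder in
theorem Matrix.PosSemidef.mul_eq_zero_of_trace_mul_eq_zero_s14 {𝕜 n : Type*} [RCLike 𝕜] [Fintype n]
    {A B : Matrix n n 𝕜} (hA : A.PosSemidef) (hB : B.PosSemidef) (h : (A * B).trace = 0) :
    A * B = 0 := by
  classical
  obtain ⟨X, rfl⟩ := CStarAlgebra.nonneg_iff_eq_star_mul_self.mp hA.nonneg
  obtain ⟨Y, rfl⟩ := CStarAlgebra.nonneg_iff_eq_star_mul_self.mp hB.nonneg
  simp only [star_eq_conjTranspose] at h ⊢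
  -- `tr (Xᴴ X Yᴴ Y) = tr ((Y Xᴴ)ᴴ (Y Xᴴ))`
  have hYX : Y * Xᴴ = 0 := by
    rw [← trace_conjTranspose_mul_self_eq_zero_iff, ← h, conjTranspose_mul,
      conjTranspose_conjTranspose, trace_mul_comm (Xᴴ * X), Matrix.mul_assoc, trace_mul_comm X]
    simp only [Matrix.mul_assoc]
  rw [Matrix.mul_assoc, ← Matrix.mul_assoc X, ← conjTranspose_conjTranspose (X * Yᴴ),
    conjTranspose_mul, conjTranspose_conjTranspose, hYX]
  simp

theorem mul_mul_eq_zero_of_perfect_correlation {R : Type*} [Ring R] {a₀ a₁ b₀ b₁ ρ : R}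
    (h₀₀ : Commute a₀ b₀) (h₁₀ : Commute a₁ b₀)
    (hcorr₁₀ : a₁ * (1 - b₁) * ρ = 0) (hcorr₀₁ : (1 - a₁) * b₁ * ρ = 0)
    (h₁₀ρ : a₁ * b₀ * ρ = 0) (h₀₀ρ : a₀ * (1 - b₁) * ρ = 0) :
    a₀ * b₀ * ρ = 0 := by
  simp only [mul_sub, sub_mul, mul_one, one_mul, sub_eq_zero, mul_assoc] at hcorr₁₀ hcorr₀₁ h₀₀ρ
  have hb₁ : b₁ * ρ = a₁ * ρ := by rw [hcorr₀₁, hcorr₁₀]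
  calc a₀ * b₀ * ρ = b₀ * (a₀ * (b₁ * ρ)) := by rw [mul_assoc, h₀₀.left_comm, ← h₀₀ρ]
    _ = b₀ * (a₀ * (a₁ * ρ)) := by rw [hb₁]
    _ = a₀ * (a₁ * (b₀ * ρ)) := by rw [← h₀₀.left_comm, ← h₁₀.left_comm]
    _ = 0 := by rw [← mul_assoc a₁, h₁₀ρ, mul_zero]

namespace Matrix

variable {α m n : Type*} [CommSemiring α] [Fintype m] [Fintype n] [DecidableEq m] [DecidableEq n]

theorem kronecker_one_mul_one_kronecker (A : Matrix m m α) (B : Matrix n n α) :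
    (A ⊗ₖ (1 : Matrix n n α)) * ((1 : Matrix m m α) ⊗ₖ B) = A ⊗ₖ B := by
  rw [← mul_kronecker_mul, Matrix.mul_one, Matrix.one_mul]

theorem commute_kronecker_one_one_kronecker (A : Matrix m m α) (B : Matrix n n α) :
    Commute (A ⊗ₖ (1 : Matrix n n α)) ((1 : Matrix m m α) ⊗ₖ B) := by
  rw [Commute, SemiconjBy, kronecker_one_mul_one_kronecker, ← mul_kronecker_mul, Matrix.mul_one,
    Matrix.one_mul]

end Matrix

open Matrix in
theorem quantum_2x2_no_singular_disagreement_general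
    (p : Fin 2 → Fin 2 → Fin 2 → Fin 2 → ℝ)
    (hq : IsQuantum p) :
    ¬ SingularDisagreement p := by
  rintro ⟨hcorr, hpos, -, hAlice, -, hBob⟩
  obtain ⟨dA, dB, -, -, ρ, E, F, hρ, -, hE, hEsum, hF, hFsum, hp⟩ := hq
  let alice x a := E x a ⊗ₖ (1 : Matrix (Fin dB) (Fin dB) ℂ)
  let bob y b := (1 : Matrix (Fin dA) (Fin dA) ℂ) ⊗ₖ F y b
  have vanish a b x y (h : p a b x y = 0) : alice x a * bob y b * ρ = 0 := by
    rw [kronecker_one_mul_one_kronecker]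
    exact ((hE x a).kronecker (hF y b)).mul_eq_zero_of_trace_mul_eq_zero_s14 hρ
      (by rw [hp, h, Complex.ofReal_zero])
  have halice : alice 1 0 = 1 - alice 1 1 := by
    rw [eq_sub_iff_add_eq, ← add_kronecker, ← Fin.sum_univ_two, hEsum, one_kronecker_one]
  have hbob : bob 1 0 = 1 - bob 1 1 := by
    rw [eq_sub_iff_add_eq, ← kronecker_add, ← Fin.sum_univ_two, hFsum, one_kronecker_one]
  have hp0001 : p 0 0 0 1 = 0 := by
    rw [Fin.sum_univ_two] at hAlice
    linarith
  have h0000 : alice 0 0 * bob 0 0 * ρ = 0 :=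
    mul_mul_eq_zero_of_perfect_correlation (commute_kronecker_one_one_kronecker _ _)
      (commute_kronecker_one_one_kronecker _ _)
      (hbob ▸ vanish 1 0 1 1 (hcorr 1 0 (by decide)))
      (halice ▸ vanish 0 1 1 1 (hcorr 0 1 (by decide)))
      (vanish 1 0 1 0 hBob) (hbob ▸ vanish 0 0 0 1 hp0001)
  have h := hp 0 0 0 0
  rw [← kronecker_one_mul_one_kronecker, h0000, trace_zero] at h
  exact hpos.ne (by exact_mod_cast h)

/-- Theorem 8 of the paper: no two-input two-output quantum box gives rise to singular
disagreement. -/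
theorem quantum_2x2_no_singular_disagreement
    (p : Fin 2 → Fin 2 → Fin 2 → Fin 2 → ℝ)
    (hbox : IsBox p) (hq : IsQuantum p) :
    ¬ SingularDisagreement p :=
  quantum_2x2_no_singular_disagreement_general p hq
end
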